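/- Second moment of the reverse work distribution is bounded by ‖V‖²: With 𝒰 = 1 and H₁ = H₀ + V, the reverse work distribution satisfies ∑_w P^rev(w) w² = tr(V² ρ₁) ≤ ‖V‖², where ρ₁ = e^{-βH₁}/Z₁. Key identity: ∑ₘ |⟨φ₀ₘ|φ₁ₙ⟩|² (ε₀ₘ − ε₁ₙ)² = ⟨φ₁ₙ| V² |φ₁ₙ⟩ for every n. -/

import Mathlib

/-!
Taking the matrix element of `V = H₁ - H₀` between eigenvectors gives
`(ε₀ₘ - ε₁ₙ) ⟨φ₀ₘ|φ₁ₙ⟩ = -⟨φ₀ₘ|V|φ₁ₙ⟩`, so by Parseval in the basis `φ₀` the second moment of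
the work conditioned on `n` is `‖V φ₁ₙ‖² = ⟨φ₁ₙ|V²|φ₁ₙ⟩`. Averaging over the Gibbs weights
`e^{-βε₁ₙ}/Z₁`, which are the eigenvalues of `ρ₁` on `φ₁`, gives `tr(V² ρ₁)`; each term is at most
`‖V‖²` and the weights sum to at most one.
-/

open scoped InnerProductSpace

theorem ContinuousLinearMap.exp_apply_of_apply_eq_smul {E : Type*} [NormedAddCommGroup E]
    [NormedSpace ℂ E] [CompleteSpace E] (A : E →L[ℂ] E) {x : E} {c : ℂ} (h : A x = c • x) :
    NormedSpace.exp A x = Complex.exp c • x := by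
  have hpow : ∀ n : ℕ, (A ^ n) x = c ^ n • x := by
    intro n
    induction n with
    | zero => simp
    | succ n ih => rw [pow_succ, mul_apply_eq_comp, h, map_smul, ih, smul_smul, pow_succ']
  have hA := (NormedSpace.exp_series_hasSum_exp' (𝕂 := ℂ) A).mapL (apply ℂ E x)
  have hc := (NormedSpace.exp_series_hasSum_exp' (𝕂 := ℂ) c).smul_const x
  rw [← Complex.exp_eq_exp_ℂ] at hc
  refine hA.unique (hc.congr_fun fun n => ?_)
  simp only [apply_apply, smul_apply, hpow, smul_smul, smul_eq_mul]

theorem ContinuousLinearMap.exp_smul_apply_of_apply_eq_smul {E : Type*} [NormedAddCommGroup E]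
    [NormedSpace ℂ E] [CompleteSpace E] (H : E →L[ℂ] E) {x : E} {e : ℝ} (h : H x = (e : ℂ) • x)
    (t : ℝ) :
    NormedSpace.exp ((t : ℂ) • H) x = (Real.exp (t * e) : ℂ) • x := by
  have htH : ((t : ℂ) • H) x = ((t * e : ℝ) : ℂ) • x := by
    rw [smul_apply, h, smul_smul, Complex.ofReal_mul]
  rw [((t : ℂ) • H).exp_apply_of_apply_eq_smul htH, Complex.ofReal_exp]

theorem Finset.sum_image_sum_filter_mul {ι κ R : Type*} [DecidableEq κ]
    [NonUnitalNonAssocSemiring R] (s : Finset ι) (f : ι → κ) (g : ι → R) (h : κ → R) :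
    ∑ k ∈ s.image f, (∑ i ∈ s.filter (fun i => f i = k), g i) * h k = ∑ i ∈ s, g i * h (f i) := by
  simp_rw [Finset.sum_mul]
  rw [← Finset.sum_fiberwise_of_maps_to (fun i hi => Finset.mem_image_of_mem f hi)]
  refine Finset.sum_congr rfl fun k _ => Finset.sum_congr rfl fun i hi => ?_
  rw [(Finset.mem_filter.mp hi).2]

section InnerProduct

variable {𝕜 E ι : Type*} [RCLike 𝕜] [NormedAddCommGroup E] [InnerProductSpace 𝕜 E] [Fintype ι]

theorem LinearMap.IsSymmetric.inner_apply_apply_self {V : E →ₗ[𝕜] E} (hV : V.IsSymmetric)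
    (v : E) : ⟪v, V (V v)⟫_𝕜 = (‖V v‖ ^ 2 : 𝕜) := by
  rw [← hV, inner_self_eq_norm_sq_to_K]

theorem LinearMap.IsSymmetric.sub_mul_inner_eq_neg_inner {H₀ V : E →ₗ[𝕜] E}
    (hH₀ : H₀.IsSymmetric) {u v : E} {a b : ℝ} (hu : H₀ u = (a : 𝕜) • u)
    (hv : (H₀ + V) v = (b : 𝕜) • v) :
    ((a - b : ℝ) : 𝕜) * ⟪u, v⟫_𝕜 = -⟪u, V v⟫_𝕜 := by
  have hVv : V v = (b : 𝕜) • v - H₀ v := by rw [← hv, LinearMap.add_apply, add_sub_cancel_left]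
  rw [hVv, inner_sub_right, ← hH₀, hu, inner_smul_left, inner_smul_right, RCLike.conj_ofReal]
  push_cast
  ring

theorem LinearMap.IsSymmetric.sum_norm_inner_sq_mul_sub_sq {H₀ V : E →ₗ[𝕜] E}
    (hH₀ : H₀.IsSymmetric) (b : OrthonormalBasis ι 𝕜 E) {e : ι → ℝ}
    (hb : ∀ i, H₀ (b i) = (e i : 𝕜) • b i) {v : E} {μ : ℝ} (hv : (H₀ + V) v = (μ : 𝕜) • v) :
    ∑ i, ‖⟪b i, v⟫_𝕜‖ ^ 2 * (e i - μ) ^ 2 = ‖V v‖ ^ 2 := by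
  rw [← b.sum_sq_norm_inner_right (V v)]
  refine Finset.sum_congr rfl fun i _ => ?_
  rw [← norm_neg (⟪b i, V v⟫_𝕜), ← hH₀.sub_mul_inner_eq_neg_inner (hb i) hv, norm_mul,
    RCLike.norm_ofReal, mul_pow, sq_abs, mul_comm]

theorem LinearMap.trace_comp_eq_sum_of_apply_eq_smul (b : OrthonormalBasis ι 𝕜 E)
    (T ρ : E →ₗ[𝕜] E) {w : ι → 𝕜} (hρ : ∀ i, ρ (b i) = w i • b i) :
    (T ∘ₗ ρ).trace 𝕜 E = ∑ i, w i * ⟪b i, T (b i)⟫_𝕜 := by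
  rw [LinearMap.trace_eq_sum_inner _ b]
  simp only [LinearMap.comp_apply, hρ, map_smul, inner_smul_right]

theorem ContinuousLinearMap.sum_norm_apply_sq_mul_le (b : OrthonormalBasis ι 𝕜 E)
    (V : E →L[𝕜] E) {w : ι → ℝ} (hw : ∀ i, 0 ≤ w i) (hw₁ : ∑ i, w i ≤ 1) :
    ∑ i, ‖V (b i)‖ ^ 2 * w i ≤ ‖V‖ ^ 2 :=
  calc ∑ i, ‖V (b i)‖ ^ 2 * w i ≤ ∑ i, ‖V‖ ^ 2 * w i := by
        gcongr with i
        · exact hw i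
        · simpa [b.orthonormal.1 i] using V.le_opNorm (b i)
    _ = ‖V‖ ^ 2 * ∑ i, w i := by rw [Finset.mul_sum]
    _ ≤ ‖V‖ ^ 2 := mul_le_of_le_one_right (by positivity) hw₁

end InnerProduct

theorem reverse_second_moment_le_normV_sq_general {N : ℕ}
    (H₀ H₁ V : EuclideanSpace ℂ (Fin N) →L[ℂ] EuclideanSpace ℂ (Fin N))
    (hH₀ : IsSelfAdjoint H₀) (hV : IsSelfAdjoint V) (hH₁ : H₁ = H₀ + V)
    (φ₀ φ₁ : OrthonormalBasis (Fin N) ℂ (EuclideanSpace ℂ (Fin N)))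
    (e0 e1 : Fin N → ℝ)
    (h0 : ∀ m, H₀ (φ₀ m) = (e0 m : ℂ) • φ₀ m)
    (h1 : ∀ n, H₁ (φ₁ n) = (e1 n : ℂ) • φ₁ n)
    (β : ℝ)
    (Z₁ : ℝ) (hZ₁ : Z₁ = ∑ n, Real.exp (-β * e1 n))
    (ρ₁ : EuclideanSpace ℂ (Fin N) →L[ℂ] EuclideanSpace ℂ (Fin N))
    (hρ₁ : ρ₁ = ((Z₁ : ℂ))⁻¹ • NormedSpace.exp (((-β : ℝ) : ℂ) • H₁))
    (Prev : ℝ → ℝ)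
    (hPrev : ∀ ω, Prev ω = ∑ p ∈ Finset.univ.filter
        (fun p : Fin N × Fin N => e0 p.1 - e1 p.2 = ω),
        ‖(inner ℂ (φ₀ p.1) (φ₁ p.2) : ℂ)‖ ^ 2 * Real.exp (-β * e1 p.2) / Z₁) :
    ((∑ ω ∈ Finset.image (fun p : Fin N × Fin N => e0 p.1 - e1 p.2) Finset.univ,
        Prev ω * ω ^ 2 : ℝ) : ℂ)
      = LinearMap.trace ℂ (EuclideanSpace ℂ (Fin N)) ((V ∘L V ∘L ρ₁).toLinearMap) ∧
    (∑ ω ∈ Finset.image (fun p : Fin N × Fin N => e0 p.1 - e1 p.2) Finset.univ,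
        Prev ω * ω ^ 2) ≤ ‖V‖ ^ 2 ∧
    (∀ n, ((∑ m, ‖(inner ℂ (φ₀ m) (φ₁ n) : ℂ)‖ ^ 2 * (e0 m - e1 n) ^ 2 : ℝ) : ℂ)
        = (inner ℂ (φ₁ n) (V (V (φ₁ n))) : ℂ)) := by
  subst hH₁ hρ₁
  set w : Fin N → ℝ := fun n => Real.exp (-β * e1 n) / Z₁
  have hkey (n : Fin N) : ∑ m, ‖⟪φ₀ m, φ₁ n⟫_ℂ‖ ^ 2 * (e0 m - e1 n) ^ 2 = ‖V (φ₁ n)‖ ^ 2 :=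
    hH₀.isSymmetric.sum_norm_inner_sq_mul_sub_sq φ₀ h0 (h1 n)
  have hρ (n : Fin N) : ((Z₁ : ℂ)⁻¹ • NormedSpace.exp (((-β : ℝ) : ℂ) • (H₀ + V))) (φ₁ n)
      = (w n : ℂ) • φ₁ n := by
    rw [smul_apply, (H₀ + V).exp_smul_apply_of_apply_eq_smul (h1 n), smul_smul]
    push_cast [w]
    ring_nf
  have hmoment : ∑ ω ∈ Finset.univ.image (fun p : Fin N × Fin N => e0 p.1 - e1 p.2),
      Prev ω * ω ^ 2 = ∑ n, ‖V (φ₁ n)‖ ^ 2 * w n := by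
    simp_rw [hPrev, Finset.sum_image_sum_filter_mul, Fintype.sum_prod_type, ← hkey,
      Finset.sum_mul]
    rw [Finset.sum_comm]
    exact Finset.sum_congr rfl fun n _ => Finset.sum_congr rfl fun m _ => by ring
  refine ⟨?_, ?_, fun n => ?_⟩
  · rw [← ContinuousLinearMap.comp_assoc, ContinuousLinearMap.toLinearMap_comp,
      LinearMap.trace_comp_eq_sum_of_apply_eq_smul φ₁ _ _ hρ, hmoment]
    push_cast
    refine Finset.sum_congr rfl fun n _ => ?_
    rw [mul_comm]
    exact congrArg _ (hV.isSymmetric.inner_apply_apply_self _).symm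
  · rw [hmoment]
    have hZ₁_nonneg : 0 ≤ Z₁ := hZ₁ ▸ by positivity
    refine V.sum_norm_apply_sq_mul_le φ₁ (fun n => by positivity) ?_
    rw [← Finset.sum_div, ← hZ₁]
    -- `Z₁ = 0` (for `N = 0`) makes every weight `0`, hence `≤ 1` rather than `= 1`
    exact div_self_le_one Z₁
  · rw [hkey n, Complex.ofReal_pow]
    exact (hV.isSymmetric.inner_apply_apply_self _).symm

/-- **Second moment of the reverse work distribution is bounded by `‖V‖²`.**
With `𝒰 = 1` and `H₁ = H₀ + V`, the reverse work distribution
`P^rev(w) = ∑_{m,n : e0ₘ−e1ₙ=w} |⟨φ₀ₘ|φ₁ₙ⟩|² e^{-β e1ₙ}/Z₁` satisfies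
`∑_w P^rev(w) w² = tr(V² ρ₁) ≤ ‖V‖²`, together with the key identity
`∑ₘ |⟨φ₀ₘ|φ₁ₙ⟩|² (e0ₘ − e1ₙ)² = ⟨φ₁ₙ|V²|φ₁ₙ⟩` for every `n`. -/
theorem reverse_second_moment_le_normV_sq {N : ℕ}
    (H₀ H₁ V : EuclideanSpace ℂ (Fin N) →L[ℂ] EuclideanSpace ℂ (Fin N))
    (hH₀ : IsSelfAdjoint H₀) (hV : IsSelfAdjoint V) (hH₁ : H₁ = H₀ + V)
    (φ₀ φ₁ : OrthonormalBasis (Fin N) ℂ (EuclideanSpace ℂ (Fin N)))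
    (e0 e1 : Fin N → ℝ)
    (h0 : ∀ m, H₀ (φ₀ m) = (e0 m : ℂ) • φ₀ m)
    (h1 : ∀ n, H₁ (φ₁ n) = (e1 n : ℂ) • φ₁ n)
    (β : ℝ) (hβ : 0 ≤ β)
    (Z₁ : ℝ) (hZ₁ : Z₁ = ∑ n, Real.exp (-β * e1 n))
    (ρ₁ : EuclideanSpace ℂ (Fin N) →L[ℂ] EuclideanSpace ℂ (Fin N))
    (hρ₁ : ρ₁ = ((Z₁ : ℂ))⁻¹ • NormedSpace.exp (((-β : ℝ) : ℂ) • H₁))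
    (Prev : ℝ → ℝ)
    (hPrev : ∀ ω, Prev ω = ∑ p ∈ Finset.univ.filter
        (fun p : Fin N × Fin N => e0 p.1 - e1 p.2 = ω),
        ‖(inner ℂ (φ₀ p.1) (φ₁ p.2) : ℂ)‖ ^ 2 * Real.exp (-β * e1 p.2) / Z₁) :
    ((∑ ω ∈ Finset.image (fun p : Fin N × Fin N => e0 p.1 - e1 p.2) Finset.univ,
        Prev ω * ω ^ 2 : ℝ) : ℂ)
      = LinearMap.trace ℂ (EuclideanSpace ℂ (Fin N)) ((V ∘L V ∘L ρ₁).toLinearMap) ∧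
    (∑ ω ∈ Finset.image (fun p : Fin N × Fin N => e0 p.1 - e1 p.2) Finset.univ,
        Prev ω * ω ^ 2) ≤ ‖V‖ ^ 2 ∧
    (∀ n, ((∑ m, ‖(inner ℂ (φ₀ m) (φ₁ n) : ℂ)‖ ^ 2 * (e0 m - e1 n) ^ 2 : ℝ) : ℂ)
        = (inner ℂ (φ₁ n) (V (V (φ₁ n))) : ℂ)) :=
  reverse_second_moment_le_normV_sq_general H₀ H₁ V hH₀ hV hH₁ φ₀ φ₁ e0 e1 h0 h1 β Z₁ hZ₁ ρ₁ hρ₁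
    Prev hPrev
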